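/- arXiv:1106.1390 — 2 statements merged into one kernel-verified Lean document; each statement's English description precedes it below -/
import Mathlib

section
/- Let C* : [0,1]^d → [0,1] be a copula satisfying the Fréchet bounds Π_j u_j ≤ C*(u) ≤ min_j u_j, and let α_{l,k,j} ≥ 0 with Σ_l Σ_k α_{l,k,j} = 1 for each j. Then the infinite product Ĉ(u) = Π_l Π_k C*(u_1^{α_{l,k,1}},...,u_d^{α_{l,k,d}}) converges to a value in (0,1] for every u ∈ (0,1]^d, and satisfies Ĉ(u) ≥ Π_{j=1}^d u_j. -/
/-!
Each factor `C*(u^{α_{l,k}})` is evaluated at a point of `(0,1]^d`, so by the Fréchet bounds its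
logarithm lies between `∑_j α_{l,k,j} log u_j` and `0`. The lower bounds are summable over `(l,k)`
with sum `∑_j log u_j = log ∏_j u_j` because each column of `α` sums to `1`, and comparison gives
both the convergence of the sum of logarithms and the bound `Ĉ(u) ≥ ∏_j u_j`.
-/

open Finset Real

section FrechetBounds

variable {ι : Type*} {C : (ι → ℝ) → ℝ} {u : ι → ℝ}

lemma rpow_pos_and_le_one (hu : ∀ j, 0 < u j ∧ u j ≤ 1) {a : ι → ℝ} (ha : ∀ j, 0 ≤ a j) :
    ∀ j, 0 < u j ^ a j ∧ u j ^ a j ≤ 1 :=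
  fun j => ⟨rpow_pos_of_pos (hu j).1 _, rpow_le_one (hu j).1.le (hu j).2 (ha j)⟩

variable [Fintype ι]

lemma log_prod_rpow (hu : ∀ j, 0 < u j) (a : ι → ℝ) :
    log (∏ j, u j ^ a j) = ∑ j, a j * log (u j) := by
  rw [log_prod fun j _ => (rpow_pos_of_pos (hu j) _).ne']
  exact sum_congr rfl fun j _ => log_rpow (hu j) _

variable (hlow : ∀ v : ι → ℝ, (∀ j, 0 ≤ v j ∧ v j ≤ 1) → (∏ j, v j) ≤ C v)
  (hu : ∀ j, 0 < u j ∧ u j ≤ 1)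
include hlow hu

lemma sum_mul_log_le_log_apply_rpow {a : ι → ℝ} (ha : ∀ j, 0 ≤ a j) :
    ∑ j, a j * log (u j) ≤ log (C fun j => u j ^ a j) := by
  have hv := rpow_pos_and_le_one hu ha
  rw [← log_prod_rpow (fun j => (hu j).1)]
  exact log_le_log (prod_pos fun j _ => (hv j).1) (hlow _ fun j => ⟨(hv j).1.le, (hv j).2⟩)

lemma log_apply_rpow_nonpos [Nonempty ι]
    (hupp : ∀ v : ι → ℝ, (∀ j, 0 ≤ v j ∧ v j ≤ 1) → ∀ j, C v ≤ v j)
    {a : ι → ℝ} (ha : ∀ j, 0 ≤ a j) : log (C fun j => u j ^ a j) ≤ 0 := by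
  have hv := rpow_pos_and_le_one hu ha
  have hpos : 0 < C fun j => u j ^ a j :=
    (prod_pos fun j _ => (hv j).1).trans_le (hlow _ fun j => ⟨(hv j).1.le, (hv j).2⟩)
  obtain ⟨j⟩ := ‹Nonempty ι›
  exact log_nonpos hpos.le
    ((hupp _ (fun j => ⟨(hv j).1.le, (hv j).2⟩) j).trans (hv j).2)

variable [Nonempty ι] (hupp : ∀ v : ι → ℝ, (∀ j, 0 ≤ v j ∧ v j ≤ 1) → ∀ j, C v ≤ v j)
  {κ : Type*} {α : κ → ι → ℝ} (hα : ∀ p j, 0 ≤ α p j) (hsummable : ∀ j, Summable fun p => α p j)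
include hupp hα hsummable

lemma summable_log_apply_rpow : Summable fun p => log (C fun j => u j ^ α p j) := by
  refine Summable.of_norm_bounded (g := fun p => -∑ j, α p j * log (u j))
    (summable_sum fun j _ => (hsummable j).mul_right _).neg fun p => ?_
  rw [norm_of_nonpos (log_apply_rpow_nonpos hlow hu hupp (hα p))]
  exact neg_le_neg (sum_mul_log_le_log_apply_rpow hlow hu (hα p))

lemma log_prod_le_tsum_log_apply_rpow (hsum : ∀ j, ∑' p, α p j = 1) :
    log (∏ j, u j) ≤ ∑' p, log (C fun j => u j ^ α p j) :=
  calc log (∏ j, u j) = ∑ j, (∑' p, α p j) * log (u j) := by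
        simp only [hsum, one_mul, log_prod fun j _ => (hu j).1.ne']
    _ = ∑' p, ∑ j, α p j * log (u j) := by
        rw [Summable.tsum_finsetSum fun j _ => (hsummable j).mul_right _]
        simp only [tsum_mul_right]
    _ ≤ ∑' p, log (C fun j => u j ^ α p j) :=
        Summable.tsum_le_tsum (fun p => sum_mul_log_le_log_apply_rpow hlow hu (hα p))
          (summable_sum fun j _ => (hsummable j).mul_right _)
          (summable_log_apply_rpow hlow hu hupp hα hsummable)

end FrechetBounds

/-- The infinite product `Ĉ(u) = ∏_{l,k} C*(u^{α_{l,k,·}})` (defined via `exp` of the sum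
of logs) converges, takes values in `(0,1]`, and dominates `∏_j u_j`. -/
theorem stmt3 (d : ℕ) (hd : 1 ≤ d) (Cstar : (Fin d → ℝ) → ℝ)
    (hlow : ∀ u : Fin d → ℝ, (∀ j, 0 ≤ u j ∧ u j ≤ 1) → (∏ j, u j) ≤ Cstar u)
    (hupp : ∀ u : Fin d → ℝ, (∀ j, 0 ≤ u j ∧ u j ≤ 1) → ∀ j, Cstar u ≤ u j)
    (α : ℕ → ℤ → Fin d → ℝ) (hα : ∀ l k j, 0 ≤ α l k j)
    (hsummable : ∀ j, Summable (fun p : ℕ × ℤ => α p.1 p.2 j))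
    (hsum : ∀ j, ∑' p : ℕ × ℤ, α p.1 p.2 j = 1)
    (u : Fin d → ℝ) (hu : ∀ j, 0 < u j ∧ u j ≤ 1) :
    Summable (fun p : ℕ × ℤ => Real.log (Cstar (fun j => u j ^ α p.1 p.2 j))) ∧
      0 < Real.exp (∑' p : ℕ × ℤ, Real.log (Cstar (fun j => u j ^ α p.1 p.2 j))) ∧
      Real.exp (∑' p : ℕ × ℤ, Real.log (Cstar (fun j => u j ^ α p.1 p.2 j))) ≤ 1 ∧
      (∏ j, u j) ≤
        Real.exp (∑' p : ℕ × ℤ, Real.log (Cstar (fun j => u j ^ α p.1 p.2 j))) := by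
  have : Nonempty (Fin d) := ⟨⟨0, hd⟩⟩
  have hα' : ∀ (p : ℕ × ℤ) j, 0 ≤ α p.1 p.2 j := fun p => hα p.1 p.2
  refine ⟨summable_log_apply_rpow hlow hu hupp hα' hsummable, exp_pos _, ?_, ?_⟩
  · exact exp_le_one_iff.2 <| tsum_nonpos fun p => log_apply_rpow_nonpos hlow hu hupp (hα' p)
  · exact (log_le_iff_le_exp (prod_pos fun j _ => (hu j).1)).1 <|
      log_prod_le_tsum_log_apply_rpow hlow hu hupp hα' hsummable hsum
end

section
/- Suppose C(u,v) = Ĉ(u^{1/θ_1}, v^{1/θ_2})^{θ(-log u/θ_1, -log v/θ_2)} where Ĉ is a bivariate max-stable copula with Ĉ(e^{-1},e^{-1}) > 0, θ_1, θ_2 ∈ (0,1], and θ : (0,∞)² → (0,1] is continuous and homogeneous of degree 0. Then the tail dependence coefficient of C satisfies λ^{(C)} = 2 + θ(1/θ_1, 1/θ_2) · log Ĉ(e^{-1/θ_1}, e^{-1/θ_2}). -/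
/-!
Along the diagonal the dependence function is frozen: writing `s = -log u`, homogeneity of degree
0 gives `θ(s/θ₁, s/θ₂) = θ(1/θ₁, 1/θ₂)`, and `u^{1/θᵢ} = (e^{-1/θᵢ})^s`, so max-stability yields
`C(u,u) = Ĉ(e^{-1/θ₁}, e^{-1/θ₂})^{s·θ(1/θ₁,1/θ₂)}`. Hence `2 - log C(u,u) / log u` is constant
on `(0,1)` and equal to the claimed value.
-/

open Real Filter Set

lemma rpow_eq_exp_neg_rpow_neg_log {u : ℝ} (hu : 0 < u) (a : ℝ) :
    u ^ a = exp (-a) ^ (-log u) := by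
  rw [← exp_mul, rpow_def_of_pos hu]
  ring_nf

lemma maxStable_rpow_homogeneous_eq {Chat θ : ℝ → ℝ → ℝ}
    (hms : ∀ t : ℝ, 0 < t → ∀ u v : ℝ, 0 < u → u ≤ 1 → 0 < v → v ≤ 1 →
      Chat (u ^ t) (v ^ t) = Chat u v ^ t)
    (hθhom : ∀ c s t : ℝ, 0 < c → 0 < s → 0 < t → θ (c * s) (c * t) = θ s t)
    {a b : ℝ} (ha : 0 < a) (hb : 0 < b) (hK : 0 ≤ Chat (exp (-(1 / a))) (exp (-(1 / b))))
    {u : ℝ} (hu : u ∈ Ioo (0 : ℝ) 1) :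
    Chat (u ^ (1 / a)) (u ^ (1 / b)) ^ θ (-log u / a) (-log u / b) =
      Chat (exp (-(1 / a))) (exp (-(1 / b))) ^ (-log u * θ (1 / a) (1 / b)) := by
  have hs : 0 < -log u := neg_pos.mpr (log_neg hu.1 hu.2)
  have exp_neg_le_one {x : ℝ} (hx : 0 < x) : exp (-x) ≤ 1 := exp_le_one_iff.mpr (by linarith)
  have hθ : θ (-log u / a) (-log u / b) = θ (1 / a) (1 / b) := by
    simpa only [mul_one_div] using hθhom _ _ _ hs (one_div_pos.mpr ha) (one_div_pos.mpr hb)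
  rw [hθ, rpow_eq_exp_neg_rpow_neg_log hu.1, rpow_eq_exp_neg_rpow_neg_log hu.1,
    hms _ hs _ _ (exp_pos _) (exp_neg_le_one (by positivity)) (exp_pos _)
      (exp_neg_le_one (by positivity)), ← rpow_mul hK]

lemma two_sub_log_rpow_neg_log_div_log {K : ℝ} (hK : 0 < K) (c : ℝ) {u : ℝ}
    (hu : u ∈ Ioo (0 : ℝ) 1) :
    2 - log (K ^ (-log u * c)) / log u = 2 + c * log K := by
  have hlog : log u ≠ 0 := (log_neg hu.1 hu.2).ne
  rw [log_rpow hK]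
  field_simp
  ring

theorem stmt12_general (Chat : ℝ → ℝ → ℝ) (C : ℝ → ℝ → ℝ) (θ : ℝ → ℝ → ℝ) (θ1 θ2 : ℝ)
    (hθ1 : 0 < θ1) (hθ2 : 0 < θ2)
    (hlow : ∀ u v : ℝ, 0 ≤ u → u ≤ 1 → 0 ≤ v → v ≤ 1 → u * v ≤ Chat u v)
    (hms : ∀ t : ℝ, 0 < t → ∀ u v : ℝ, 0 < u → u ≤ 1 → 0 < v → v ≤ 1 →
      Chat (u ^ t) (v ^ t) = Chat u v ^ t)
    (hθhom : ∀ c s t : ℝ, 0 < c → 0 < s → 0 < t → θ (c * s) (c * t) = θ s t)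
    (hC : ∀ u v : ℝ, 0 < u → u < 1 → 0 < v → v < 1 →
      C u v = Chat (u ^ (1 / θ1)) (v ^ (1 / θ2)) ^ θ (-Real.log u / θ1) (-Real.log v / θ2)) :
    Filter.Tendsto (fun u : ℝ => 2 - Real.log (C u u) / Real.log u)
      (nhdsWithin 1 (Set.Ioo (0 : ℝ) 1))
      (nhds (2 + θ (1 / θ1) (1 / θ2) *
        Real.log (Chat (Real.exp (-(1 / θ1))) (Real.exp (-(1 / θ2)))))) := by
  have exp_neg_mem {x : ℝ} (hx : 0 < x) : exp (-x) ∈ Icc (0 : ℝ) 1 :=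
    ⟨(exp_pos _).le, exp_le_one_iff.mpr (by linarith)⟩
  obtain ⟨he1₀, he1₁⟩ := exp_neg_mem (one_div_pos.mpr hθ1)
  obtain ⟨he2₀, he2₁⟩ := exp_neg_mem (one_div_pos.mpr hθ2)
  have hK : 0 < Chat (exp (-(1 / θ1))) (exp (-(1 / θ2))) :=
    (mul_pos (exp_pos _) (exp_pos _)).trans_le (hlow _ _ he1₀ he1₁ he2₀ he2₁)
  refine tendsto_const_nhds.congr' (eventually_nhdsWithin_of_forall fun u hu => ?_)
  dsimp only
  rw [hC u u hu.1 hu.2 hu.1 hu.2, maxStable_rpow_homogeneous_eq hms hθhom hθ1 hθ2 hK.le hu,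
    two_sub_log_rpow_neg_log_div_log hK _ hu]

/-- For `C(u,v) = Ĉ(u^{1/θ₁}, v^{1/θ₂})^{θ(-log u/θ₁, -log v/θ₂)}` with `Ĉ` max-stable
and `θ` continuous, homogeneous of degree 0 with values in `(0,1]`, the tail dependence
coefficient of `C` equals `2 + θ(1/θ₁,1/θ₂)·log Ĉ(e^{-1/θ₁}, e^{-1/θ₂})`. -/
theorem stmt12 (Chat : ℝ → ℝ → ℝ) (C : ℝ → ℝ → ℝ) (θ : ℝ → ℝ → ℝ) (θ1 θ2 : ℝ)
    (hθ1 : 0 < θ1) (hθ1' : θ1 ≤ 1) (hθ2 : 0 < θ2) (hθ2' : θ2 ≤ 1)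
    (hlow : ∀ u v : ℝ, 0 ≤ u → u ≤ 1 → 0 ≤ v → v ≤ 1 → u * v ≤ Chat u v)
    (hupp : ∀ u v : ℝ, 0 ≤ u → u ≤ 1 → 0 ≤ v → v ≤ 1 → Chat u v ≤ min u v)
    (hms : ∀ t : ℝ, 0 < t → ∀ u v : ℝ, 0 < u → u ≤ 1 → 0 < v → v ≤ 1 →
      Chat (u ^ t) (v ^ t) = Chat u v ^ t)
    (hChatpos : 0 < Chat (Real.exp (-1)) (Real.exp (-1)))
    (hθcont : ContinuousOn (fun p : ℝ × ℝ => θ p.1 p.2) {p | 0 < p.1 ∧ 0 < p.2})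
    (hθhom : ∀ c s t : ℝ, 0 < c → 0 < s → 0 < t → θ (c * s) (c * t) = θ s t)
    (hθrange : ∀ s t : ℝ, 0 < s → 0 < t → 0 < θ s t ∧ θ s t ≤ 1)
    (hC : ∀ u v : ℝ, 0 < u → u < 1 → 0 < v → v < 1 →
      C u v = Chat (u ^ (1 / θ1)) (v ^ (1 / θ2)) ^ θ (-Real.log u / θ1) (-Real.log v / θ2)) :
    Filter.Tendsto (fun u : ℝ => 2 - Real.log (C u u) / Real.log u)
      (nhdsWithin 1 (Set.Ioo (0 : ℝ) 1))
      (nhds (2 + θ (1 / θ1) (1 / θ2) *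
        Real.log (Chat (Real.exp (-(1 / θ1))) (Real.exp (-(1 / θ2)))))) :=
  stmt12_general Chat C θ θ1 θ2 hθ1 hθ2 hlow hms hθhom hC
end
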